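/- Divergence of the classical Schwarz method on intermediate frequencies (Theorem 2.2, middle case): for every fixed Fourier frequency k with ω/Cp < k < ω/Cs (so that λ₁ = i√(ω²/Cs² − k²) is purely imaginary and λ₂ = √(k² − ω²/Cp²) > 0 is real), there exists δ₀ > 0 such that for all overlaps δ with 0 < δ < δ₀, the quadratic Q(z) = z² − (X² + 2Y)z + Y² has a root of modulus strictly greater than 1; hence ρ_cla(k) > 1 and the classical Schwarz method diverges for small overlap. -/

import Mathlib

noncomputable section

open Complex

/-- `λ₁ = √(k² − ω²/Cs²)`, principal branch of the complex square root. -/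
def lam1 (ω Cs k : ℝ) : ℂ := ((k ^ 2 - ω ^ 2 / Cs ^ 2 : ℝ) : ℂ) ^ ((1 : ℂ) / 2)

/-- `λ₂ = √(k² − ω²/Cp²)`, principal branch of the complex square root. -/
def lam2 (ω Cp k : ℝ) : ℂ := ((k ^ 2 - ω ^ 2 / Cp ^ 2 : ℝ) : ℂ) ^ ((1 : ℂ) / 2)

/-- `X = ((k² + λ₁λ₂)/(k² − λ₁λ₂))(e^{−λ₁δ} − e^{−λ₂δ})` of the classical Schwarz method. -/
def Xcla (ω Cs Cp k δ : ℝ) : ℂ :=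
  (((k : ℂ) ^ 2 + lam1 ω Cs k * lam2 ω Cp k) / ((k : ℂ) ^ 2 - lam1 ω Cs k * lam2 ω Cp k)) *
    (Complex.exp (-(lam1 ω Cs k) * (δ : ℂ)) - Complex.exp (-(lam2 ω Cp k) * (δ : ℂ)))

/-- `Y = e^{−δ(λ₁+λ₂)}` of the classical Schwarz method. -/
def Ycla (ω Cs Cp k δ : ℝ) : ℂ :=
  Complex.exp (-(δ : ℂ) * (lam1 ω Cs k + lam2 ω Cp k))

/-- The quadratic `Q(z) = z² − (X² + 2Y)z + Y²` whose roots are the eigenvalues `r±`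
of the double-iteration operator of the classical overlapping Schwarz method. -/
def Qcla (ω Cs Cp k δ : ℝ) (z : ℂ) : ℂ :=
  z ^ 2 - ((Xcla ω Cs Cp k δ) ^ 2 + 2 * Ycla ω Cs Cp k δ) * z + (Ycla ω Cs Cp k δ) ^ 2

/-! At `δ = 0` we have `X = 0` and `Y = 1`, so the root `r₊ = Y + X²/2 + X √(X²/4 + Y)` of `Q`
equals `1`. With `λ₁ = a i`, `λ₂ = b` (`a, b > 0`, `b < k`), the derivative of `r₊` at `δ = 0` is
`-(λ₁ + λ₂) + c (λ₂ - λ₁)`, `c = (k² + λ₁λ₂)/(k² - λ₁λ₂)`, whose real part is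
`2a²b(k² - b²)/(k⁴ + a²b²) > 0`. Hence `1 < Re r₊ ≤ ‖r₊‖` for all small overlaps `δ > 0`. -/

open Filter Topology

def rootPlus (X Y : ℂ) : ℂ := Y + X ^ 2 / 2 + X * (X ^ 2 / 4 + Y) ^ (2⁻¹ : ℂ)

lemma rootPlus_isRoot (X Y : ℂ) :
    rootPlus X Y ^ 2 - (X ^ 2 + 2 * Y) * rootPlus X Y + Y ^ 2 = 0 := by
  have hsq : ((X ^ 2 / 4 + Y) ^ (2⁻¹ : ℂ)) ^ 2 = X ^ 2 / 4 + Y :=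
    Complex.cpow_ofNat_inv_pow _ 2
  unfold rootPlus
  linear_combination X ^ 2 * hsq

lemma HasDerivAt.rootPlus {X Y : ℝ → ℂ} {x y : ℂ} {t : ℝ} (hX : HasDerivAt X x t)
    (hY : HasDerivAt Y y t) (hXt : X t = 0) (hYt : Y t = 1) :
    HasDerivAt (fun δ ↦ rootPlus (X δ) (Y δ)) (y + x) t := by
  have hX2 : HasDerivAt (fun δ ↦ X δ ^ 2) 0 t := by
    simpa [hXt] using hX.fun_pow 2
  have hw : HasDerivAt (fun δ ↦ X δ ^ 2 / 4 + Y δ) y t := by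
    simpa using (hX2.div_const 4).fun_add hY
  have hsqrt : HasDerivAt (fun δ ↦ (X δ ^ 2 / 4 + Y δ) ^ (2⁻¹ : ℂ)) (2⁻¹ * y) t := by
    have hcpow := (Complex.hasStrictDerivAt_cpow_const (c := (2⁻¹ : ℂ)) (x := 1)
      (by simp)).hasDerivAt
    exact (hcpow.comp_of_eq t hw (by simp [hXt, hYt])).congr_deriv (by norm_num)
  exact ((hY.fun_add (hX2.div_const 2)).fun_add (hX.fun_mul hsqrt)).congr_deriv
    (by simp [hXt, hYt])

lemma HasDerivAt.eventually_nhdsGT_lt {f : ℝ → ℝ} {f' x : ℝ} (hf : HasDerivAt f f' x)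
    (hf' : 0 < f') : ∀ᶠ y in 𝓝[>] x, f x < f y := by
  have hslope : Tendsto (slope f x) (𝓝[>] x) (𝓝 f') :=
    (hasDerivAt_iff_tendsto_slope.mp hf).mono_left (nhdsWithin_mono _ fun y hy ↦ ne_of_gt hy)
  filter_upwards [hslope.eventually (eventually_gt_nhds hf'), self_mem_nhdsWithin] with y hpos hy
  rw [slope_def_field] at hpos
  exact sub_pos.mp ((div_pos_iff_of_pos_right (sub_pos.mpr hy)).mp hpos)

lemma ofReal_cpow_half_of_nonneg {s : ℝ} (hs : 0 ≤ s) : (s : ℂ) ^ ((1 : ℂ) / 2) = Real.sqrt s := by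
  rw [Real.sqrt_eq_rpow, Complex.ofReal_cpow hs]
  norm_num

lemma ofReal_cpow_half_of_neg {t : ℝ} (ht : t < 0) :
    (t : ℂ) ^ ((1 : ℂ) / 2) = Real.sqrt (-t) * I := by
  rw [Complex.ofReal_cpow_of_nonpos ht.le, ← Complex.ofReal_neg,
    ofReal_cpow_half_of_nonneg (by linarith)]
  congr 1
  rw [show (Real.pi : ℂ) * I * (1 / 2) = (Real.pi / 2 : ℝ) * I by push_cast; ring,
    Complex.exp_mul_I]
  simp

lemma re_rootPlus_slope_pos {a b k : ℝ} (ha : 0 < a) (hb : 0 < b) (hbk : b < k) :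
    0 < (-(a * I + b) + (k ^ 2 + a * I * b) / (k ^ 2 - a * I * b) * (b - a * I)).re := by
  have hD : b ^ 2 * a ^ 2 + k ^ 4 ≠ 0 := by positivity
  have hre : (-(a * I + b) + (k ^ 2 + a * I * b) / (k ^ 2 - a * I * b) * (b - a * I)).re
      = 2 * a ^ 2 * b * (k ^ 2 - b ^ 2) / (k ^ 4 + a ^ 2 * b ^ 2) := by
    rw [div_mul_eq_mul_div]
    simp [Complex.div_re, pow_two, Complex.normSq_apply]
    linear_combination b * inv_mul_cancel₀ hD
  rw [hre]
  have hk2 : 0 < k ^ 2 - b ^ 2 := by nlinarith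
  positivity

lemma lam1_eq_sqrt_mul_I {ω Cs k : ℝ} (h : k ^ 2 < ω ^ 2 / Cs ^ 2) :
    lam1 ω Cs k = Real.sqrt (ω ^ 2 / Cs ^ 2 - k ^ 2) * I := by
  rw [lam1, ofReal_cpow_half_of_neg (sub_neg.mpr h), neg_sub]

lemma lam2_eq_sqrt {ω Cp k : ℝ} (h : ω ^ 2 / Cp ^ 2 ≤ k ^ 2) :
    lam2 ω Cp k = Real.sqrt (k ^ 2 - ω ^ 2 / Cp ^ 2) := by
  rw [lam2, ofReal_cpow_half_of_nonneg (sub_nonneg.mpr h)]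

lemma Xcla_zero (ω Cs Cp k : ℝ) : Xcla ω Cs Cp k 0 = 0 := by
  simp [Xcla]

lemma Ycla_zero (ω Cs Cp k : ℝ) : Ycla ω Cs Cp k 0 = 1 := by
  simp [Ycla]

lemma hasDerivAt_cexp_neg_mul (l : ℂ) : HasDerivAt (fun δ : ℝ ↦ Complex.exp (-l * δ)) (-l) 0 := by
  simpa using ((hasDerivAt_id (0 : ℝ)).ofReal_comp.const_mul (-l)).cexp

lemma hasDerivAt_Xcla (ω Cs Cp k : ℝ) :
    HasDerivAt (Xcla ω Cs Cp k)
      ((k ^ 2 + lam1 ω Cs k * lam2 ω Cp k) / (k ^ 2 - lam1 ω Cs k * lam2 ω Cp k) *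
        (lam2 ω Cp k - lam1 ω Cs k)) 0 :=
  (((hasDerivAt_cexp_neg_mul _).fun_sub (hasDerivAt_cexp_neg_mul _)).const_mul _).congr_deriv
    (by ring)

lemma hasDerivAt_Ycla (ω Cs Cp k : ℝ) :
    HasDerivAt (Ycla ω Cs Cp k) (-(lam1 ω Cs k + lam2 ω Cp k)) 0 := by
  have hY : Ycla ω Cs Cp k = fun δ : ℝ ↦ Complex.exp (-(lam1 ω Cs k + lam2 ω Cp k) * δ) := by
    funext δ
    rw [Ycla, neg_mul, neg_mul, mul_comm]
  exact hY ▸ hasDerivAt_cexp_neg_mul _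

theorem classical_schwarz_intermediate_divergence
    (ω Cs Cp k : ℝ)
    (hω : 0 < ω) (hCs : 0 < Cs) (hCsCp : Cs < Cp)
    (hk1 : ω / Cp < k) (hk2 : k < ω / Cs) :
    ∃ δ₀ > 0, ∀ δ : ℝ, 0 < δ → δ < δ₀ →
      ∃ z : ℂ, Qcla ω Cs Cp k δ z = 0 ∧ 1 < ‖z‖ := by
  have hωCp : 0 < ω / Cp := div_pos hω (hCs.trans hCsCp)
  have hk : 0 < k := hωCp.trans hk1
  have hsq1 : k ^ 2 < ω ^ 2 / Cs ^ 2 := by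
    rw [← div_pow]; exact pow_lt_pow_left₀ hk2 hk.le two_ne_zero
  have hsq2 : ω ^ 2 / Cp ^ 2 < k ^ 2 := by
    rw [← div_pow]; exact pow_lt_pow_left₀ hk1 hωCp.le two_ne_zero
  have ha : 0 < Real.sqrt (ω ^ 2 / Cs ^ 2 - k ^ 2) := Real.sqrt_pos.mpr (sub_pos.mpr hsq1)
  have hb : 0 < Real.sqrt (k ^ 2 - ω ^ 2 / Cp ^ 2) := Real.sqrt_pos.mpr (sub_pos.mpr hsq2)
  have hbk : Real.sqrt (k ^ 2 - ω ^ 2 / Cp ^ 2) < k :=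
    (Real.sqrt_lt' hk).mpr (by linarith [pow_pos hωCp 2, div_pow ω Cp 2])
  have hroot := (hasDerivAt_Xcla ω Cs Cp k).rootPlus (hasDerivAt_Ycla ω Cs Cp k)
    (Xcla_zero ω Cs Cp k) (Ycla_zero ω Cs Cp k)
  -- only the derivative mentions `lam1`, `lam2`; inside `Xcla`, `Ycla` they stay folded
  rw [lam1_eq_sqrt_mul_I hsq1, lam2_eq_sqrt hsq2.le] at hroot
  obtain ⟨δ₀, hδ₀, hgt⟩ := mem_nhdsGT_iff_exists_Ioo_subset.mp
    ((Complex.reCLM.hasFDerivAt.comp_hasDerivAt 0 hroot).eventually_nhdsGT_lt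
      (re_rootPlus_slope_pos ha hb hbk))
  refine ⟨δ₀, hδ₀, fun δ hδ hδδ₀ ↦ ⟨_, rootPlus_isRoot _ _, ?_⟩⟩
  calc (1 : ℝ) = (rootPlus (Xcla ω Cs Cp k 0) (Ycla ω Cs Cp k 0)).re := by
        simp [Xcla_zero, Ycla_zero, rootPlus]
    _ < (rootPlus (Xcla ω Cs Cp k δ) (Ycla ω Cs Cp k δ)).re := hgt ⟨hδ, hδδ₀⟩
    _ ≤ ‖rootPlus (Xcla ω Cs Cp k δ) (Ycla ω Cs Cp k δ)‖ := Complex.re_le_norm _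

end
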